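/- Let k' be a flat commutative k-algebra, and set B = A ⊗_k k' with involution η = θ ⊗ id. Then there is a canonical isomorphism of k'[t]-algebras 𝐀 ⊗_k k' ≅ 𝐁, where 𝐀 and 𝐁 are the contraction algebras of (A, θ) over k and (B, η) over k' respectively. -/

import Mathlib

open LaurentPolynomial

/-- The contraction algebra `𝐀`: the `k[t]`-subalgebra of `A[√t^{±1}]`
(with `t = (√t)²`) generated by `A^θ` and `(1/√t)·A^{-θ}`. -/
noncomputable def contraction (k A : Type*) [CommRing k] [CommRing A] [Algebra k A]
    (θ : A →ₐ[k] A) : Subalgebra k (LaurentPolynomial A) :=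
  Algebra.adjoin k (insert (T 2)
    ({f | ∃ a, θ a = a ∧ f = C a} ∪ {f | ∃ a, θ a = -a ∧ f = C a * T (-1)}))

open TensorProduct

/-!
Laurent polynomials commute with base change, so `k' ⊗ 𝐀` maps to
`k' ⊗ A[√t^{±1}] ≅ (k' ⊗ A)[√t^{±1}]`, injectively since `k'` is flat. The image is the
`k'`-algebra generated by `t`, `C (1 ⊗ a)` for `θ a = a` and `C (1 ⊗ a) / √t` for
`θ a = -a`. It is `𝐁` because, by flatness again, the eigenspaces `ker (η ∓ 1)` of
`η = id ⊗ θ` are the base changes of the eigenspaces `ker (θ ∓ 1)`.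
-/

theorem Module.Flat.ker_baseChange {R A M N : Type*} [CommRing R] [CommRing A] [Algebra R A]
    [AddCommGroup M] [Module R M] [AddCommGroup N] [Module R N] [Module.Flat R A]
    (f : M →ₗ[R] N) : LinearMap.ker (f.baseChange A) = (LinearMap.ker f).baseChange A :=
  Module.Flat.ker_lTensor_eq A A f

theorem Submodule.baseChange_le_iff_forall_tmul_mem {R A M : Type*} [CommSemiring R]
    [Semiring A] [Algebra R A] [AddCommMonoid M] [Module R M] {p : Submodule R M}
    {q : Submodule A (A ⊗[R] M)} :
    p.baseChange A ≤ q ↔ ∀ m ∈ p, (1 : A) ⊗ₜ[R] m ∈ q := by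
  rw [Submodule.baseChange_eq_span, Submodule.span_le]
  simp [Set.subset_def]

namespace LaurentPolynomial

variable {R A B : Type*} [CommSemiring R] [CommSemiring A] [CommSemiring B] [Algebra R A]
  [Algebra R B]

theorem algHom_ext_C_mul_T {Φ Ψ : LaurentPolynomial A →ₐ[R] B}
    (h : ∀ a n, Φ (C a * T n) = Ψ (C a * T n)) : Φ = Ψ :=
  AlgHom.toLinearMap_injective <| AddMonoidAlgebra.lhom_ext' fun n => LinearMap.ext fun a => by
    change Φ (.single n a) = Ψ (.single n a)
    rw [single_eq_C_mul_T, h]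

theorem mapAlgHom_C (f : A →ₐ[R] B) (a : A) :
    AddMonoidAlgebra.mapAlgHom ℤ f (C a) = C (f a) :=
  AddMonoidAlgebra.mapAlgHom_single f 0 a

theorem mapAlgHom_T (f : A →ₐ[R] B) (n : ℤ) : AddMonoidAlgebra.mapAlgHom ℤ f (T n) = T n :=
  (AddMonoidAlgebra.mapAlgHom_single f n 1).trans (congrArg _ (map_one f))

end LaurentPolynomial

section Contraction

variable {k A : Type*} [CommRing k] [CommRing A] [Algebra k A] {θ : A →ₐ[k] A}

theorem T_two_mem_contraction : (T 2 : LaurentPolynomial A) ∈ contraction k A θ :=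
  Algebra.subset_adjoin (Set.mem_insert _ _)

theorem C_mem_contraction {a : A} (ha : θ a = a) : C a ∈ contraction k A θ :=
  Algebra.subset_adjoin (Or.inr (Or.inl ⟨a, ha, rfl⟩))

theorem C_mul_T_neg_one_mem_contraction {a : A} (ha : θ a = -a) :
    C a * T (-1) ∈ contraction k A θ :=
  Algebra.subset_adjoin (Or.inr (Or.inr ⟨a, ha, rfl⟩))

theorem contraction_le {S : Subalgebra k (LaurentPolynomial A)} (hT : T 2 ∈ S)
    (hfix : ∀ a, θ a = a → C a ∈ S) (hanti : ∀ a, θ a = -a → C a * T (-1) ∈ S) :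
    contraction k A θ ≤ S :=
  Algebra.adjoin_le <| by
    rintro _ (rfl | ⟨a, ha, rfl⟩ | ⟨a, ha, rfl⟩)
    exacts [hT, hfix a ha, hanti a ha]

end Contraction

section BaseChange

variable {k k' A : Type*} [CommRing k] [CommRing k'] [CommRing A] [Algebra k k'] [Algebra k A]
  {θ : A →ₐ[k] A}

local notation "η₀" => Algebra.TensorProduct.map (AlgHom.id k' k') θ

local notation "Φ₀" =>
  AddMonoidAlgebra.mapAlgHom ℤ (Algebra.TensorProduct.includeRight : A →ₐ[k] k' ⊗[k] A)

local notation "Cₗ" =>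
  AlgHom.toLinearMap (IsScalarTower.toAlgHom k' (k' ⊗[k] A) (LaurentPolynomial (k' ⊗[k] A)))

variable (k') in
noncomputable def contractionBaseChangeHom (θ : A →ₐ[k] A) :
    k' ⊗[k] contraction k A θ →ₐ[k'] LaurentPolynomial (k' ⊗[k] A) :=
  (AddMonoidAlgebra.rTensorEquivAlgEquiv (M := ℤ) k k' k' A).toAlgHom.comp
    (Algebra.TensorProduct.map (AlgHom.id k' k') (contraction k A θ).val)

theorem contractionBaseChangeHom_tmul (c : k') (x : contraction k A θ) :
    contractionBaseChangeHom k' θ (c ⊗ₜ x) = c • Φ₀ (x : LaurentPolynomial A) :=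
  AddMonoidAlgebra.rTensorEquiv_tmulAlgEquiv (S := k') ..

theorem contractionBaseChangeHom_injective [Module.Flat k k'] :
    Function.Injective (contractionBaseChangeHom k' θ) :=
  fun _ _ h => Module.Flat.lTensor_preserves_injective_linearMap (M := k')
    (contraction k A θ).val.toLinearMap Subtype.val_injective
    ((AddMonoidAlgebra.rTensorEquivAlgEquiv (M := ℤ) k k' k' A).injective h)

theorem mapAlgHom_mem_contraction_baseChange {x : LaurentPolynomial A}
    (hx : x ∈ contraction k A θ) : Φ₀ x ∈ contraction k' (k' ⊗[k] A) η₀ := by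
  refine contraction_le (S := ((contraction k' _ η₀).restrictScalars k).comap Φ₀) ?_ ?_ ?_ hx
  · simpa [mapAlgHom_T] using T_two_mem_contraction
  · intro a ha
    simpa [mapAlgHom_C] using C_mem_contraction (by simp [ha])
  · intro a ha
    simpa [mapAlgHom_C, mapAlgHom_T] using
      C_mul_T_neg_one_mem_contraction (by simp [ha, tmul_neg])

theorem C_mem_range_contractionBaseChangeHom [Module.Flat k k'] {b : k' ⊗[k] A}
    (hb : η₀ b = b) : C b ∈ (contractionBaseChangeHom k' θ).range := by
  have hker : b ∈ (LinearMap.ker (θ.toLinearMap - 1)).baseChange k' := by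
    rw [← Module.Flat.ker_baseChange, LinearMap.mem_ker, LinearMap.baseChange_sub,
      LinearMap.baseChange_one, LinearMap.sub_apply, Module.End.one_apply, sub_eq_zero]
    exact hb
  have hle : (LinearMap.ker (θ.toLinearMap - 1)).baseChange k' ≤
      (contractionBaseChangeHom k' θ).range.toSubmodule.comap Cₗ := by
    refine Submodule.baseChange_le_iff_forall_tmul_mem.2 fun a ha => ?_
    have hfix : θ a = a := by simpa [sub_eq_zero] using ha
    exact ⟨1 ⊗ₜ ⟨C a, C_mem_contraction hfix⟩,
      by simp [contractionBaseChangeHom_tmul, mapAlgHom_C]⟩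
  exact hle hker

theorem C_mul_T_neg_one_mem_range_contractionBaseChangeHom [Module.Flat k k'] {b : k' ⊗[k] A}
    (hb : η₀ b = -b) : C b * T (-1) ∈ (contractionBaseChangeHom k' θ).range := by
  have hker : b ∈ (LinearMap.ker (θ.toLinearMap + 1)).baseChange k' := by
    rw [← Module.Flat.ker_baseChange, LinearMap.mem_ker, LinearMap.baseChange_add,
      LinearMap.baseChange_one, LinearMap.add_apply, Module.End.one_apply,
      add_eq_zero_iff_eq_neg]
    exact hb
  have hle : (LinearMap.ker (θ.toLinearMap + 1)).baseChange k' ≤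
      (contractionBaseChangeHom k' θ).range.toSubmodule.comap
        (LinearMap.mulRight k' (T (-1) : LaurentPolynomial (k' ⊗[k] A)) ∘ₗ Cₗ) := by
    refine Submodule.baseChange_le_iff_forall_tmul_mem.2 fun a ha => ?_
    have hanti : θ a = -a := by simpa [add_eq_zero_iff_eq_neg] using ha
    exact ⟨1 ⊗ₜ ⟨C a * T (-1), C_mul_T_neg_one_mem_contraction hanti⟩,
      by simp [contractionBaseChangeHom_tmul, mapAlgHom_C, mapAlgHom_T]⟩
  exact hle hker

theorem range_contractionBaseChangeHom [Module.Flat k k'] :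
    (contractionBaseChangeHom k' θ).range = contraction k' (k' ⊗[k] A) η₀ := by
  refine le_antisymm ?_ (contraction_le ?_ (fun _ => C_mem_range_contractionBaseChangeHom)
    (fun _ => C_mul_T_neg_one_mem_range_contractionBaseChangeHom))
  · rintro _ ⟨z, rfl⟩
    change contractionBaseChangeHom k' θ z ∈ _
    induction z using TensorProduct.induction_on with
    | zero => simp
    | tmul c x =>
      rw [contractionBaseChangeHom_tmul]
      exact Subalgebra.smul_mem _ (mapAlgHom_mem_contraction_baseChange x.2) c
    | add x y hx hy =>
      rw [map_add]
      exact Subalgebra.add_mem _ hx hy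
  · exact ⟨1 ⊗ₜ ⟨T 2, T_two_mem_contraction⟩,
      by simp [contractionBaseChangeHom_tmul, mapAlgHom_T]⟩

end BaseChange

theorem contraction_flat_baseChange_general
    (k k' A : Type*) [CommRing k] [CommRing k'] [CommRing A]
    [Algebra k k'] [Algebra k A] [Module.Flat k k']
    (θ : A →ₐ[k] A)
    (η : (k' ⊗[k] A) →ₐ[k'] (k' ⊗[k] A))
    (hη : ∀ (c : k') (a : A), η (c ⊗ₜ[k] a) = c ⊗ₜ[k] θ a)
    (Φ : LaurentPolynomial A →ₐ[k] LaurentPolynomial (k' ⊗[k] A))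
    (hΦ : ∀ (a : A) (n : ℤ), Φ (C a * T n) = C ((1 : k') ⊗ₜ[k] a) * T n) :
    ∃ e : (k' ⊗[k] ↥(contraction k A θ)) ≃ₐ[k'] ↥(contraction k' (k' ⊗[k] A) η),
      ∀ (x : ↥(contraction k A θ))
        (hx : Φ (x : LaurentPolynomial A) ∈ contraction k' (k' ⊗[k] A) η),
        e ((1 : k') ⊗ₜ[k] x) = ⟨Φ (x : LaurentPolynomial A), hx⟩ := by
  obtain rfl : η = Algebra.TensorProduct.map (AlgHom.id k' k') θ :=
    Algebra.TensorProduct.ext' fun c a => by simp [hη]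
  obtain rfl : Φ = AddMonoidAlgebra.mapAlgHom ℤ Algebra.TensorProduct.includeRight :=
    algHom_ext_C_mul_T fun a n => by rw [hΦ, map_mul, mapAlgHom_C, mapAlgHom_T]; rfl
  have hinj := contractionBaseChangeHom_injective (k' := k') (θ := θ)
  refine ⟨(AlgEquiv.ofInjective _ hinj).trans
    (Subalgebra.equivOfEq _ _ range_contractionBaseChangeHom), fun x _ => Subtype.ext ?_⟩
  exact (contractionBaseChangeHom_tmul (1 : k') x).trans (one_smul _ _)

set_option synthInstance.maxHeartbeats 1000000 in
set_option maxHeartbeats 1000000 in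
theorem contraction_flat_baseChange
    (k k' A : Type*) [CommRing k] [CommRing k'] [CommRing A]
    [Algebra k k'] [Algebra k A] [Module.Flat k k'] [Invertible (2 : k)]
    (θ : A →ₐ[k] A) (hθ : θ.comp θ = AlgHom.id k A)
    (η : (k' ⊗[k] A) →ₐ[k'] (k' ⊗[k] A))
    (hη : ∀ (c : k') (a : A), η (c ⊗ₜ[k] a) = c ⊗ₜ[k] θ a)
    (Φ : LaurentPolynomial A →ₐ[k] LaurentPolynomial (k' ⊗[k] A))
    (hΦ : ∀ (a : A) (n : ℤ), Φ (C a * T n) = C ((1 : k') ⊗ₜ[k] a) * T n) :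
    ∃ e : (k' ⊗[k] ↥(contraction k A θ)) ≃ₐ[k'] ↥(contraction k' (k' ⊗[k] A) η),
      ∀ (x : ↥(contraction k A θ))
        (hx : Φ (x : LaurentPolynomial A) ∈ contraction k' (k' ⊗[k] A) η),
        e ((1 : k') ⊗ₜ[k] x) = ⟨Φ (x : LaurentPolynomial A), hx⟩ :=
  contraction_flat_baseChange_general k k' A θ η hη Φ hΦ
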